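/- arXiv:1401.2639 — 3 statements merged into one kernel-verified Lean document; each statement's English description precedes it below -/
import Mathlib

section
/- Every function holomorphic on the punctured open unit ball {z ∈ ℂ² : 0 < ‖z‖ < 1} extends to a holomorphic function on the full open unit ball {z ∈ ℂ² : ‖z‖ < 1}. In particular, there is no holomorphic function of two complex variables with an isolated singularity at the origin of the unit ball (so the punctured ball is not a domain of holomorphy). -/
/-!
Let `g` be holomorphic on a punctured neighbourhood of `0` in `ℂ²`. For a small polydisc of
radius `r`, the Cauchy integral in the first variable
`G p = (2πi)⁻¹ ∮_{|z| = r} (z - p.1)⁻¹ g (z, p.2) dz`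
only involves `g` on `{|z| = r} × {|y| < r}`, which avoids the origin. Differentiating under the
integral sign, with Cauchy's estimate bounding the derivative of `g` in the second variable, shows
that `G` is holomorphic on the whole polydisc. For `p.2 ≠ 0` the disc `{|z| ≤ r} × {p.2}` avoids
the origin, so the one-variable Cauchy formula gives `G p = g p`; continuity in `p.2` extends this
to `p.2 = 0`, `p.1 ≠ 0`. Hence `g`, redefined at `0` as `G 0`, is holomorphic at `0`.
-/

open Complex Metric Set Filter Topology MeasureTheory ContinuousLinearMap Real

section Slices

variable {𝕜 E F G : Type*} [NontriviallyNormedField 𝕜] [NormedAddCommGroup E] [NormedSpace 𝕜 E]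
  [NormedAddCommGroup F] [NormedSpace 𝕜 F] [NormedAddCommGroup G] [NormedSpace 𝕜 G]
  {g : E × F → G} {x : E} {y : F}

lemma DifferentiableAt.comp_prodMk_left (hg : DifferentiableAt 𝕜 g (x, y)) :
    DifferentiableAt 𝕜 (fun z => g (z, y)) x :=
  hg.comp x (differentiableAt_id.prodMk (differentiableAt_const y))

lemma DifferentiableAt.hasFDerivAt_comp_prodMk_right (hg : DifferentiableAt 𝕜 g (x, y)) :
    HasFDerivAt (fun z => g (x, z)) (fderiv 𝕜 g (x, y) ∘L inr 𝕜 E F) y :=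
  hg.hasFDerivAt.comp y (hasFDerivAt_prodMk_right x y)

end Slices

lemma norm_fderiv_comp_inr_le {E F : Type*} [NormedAddCommGroup E] [NormedSpace ℂ E]
    [NormedAddCommGroup F] [NormedSpace ℂ F] {g : E × ℂ → F} {x : E} {y : ℂ} {ε M : ℝ}
    (hε : 0 < ε) (hg : ∀ z ∈ closedBall y ε, DifferentiableAt ℂ g (x, z))
    (hM : ∀ z ∈ sphere y ε, ‖g (x, z)‖ ≤ M) :
    ‖fderiv ℂ g (x, y) ∘L inr ℂ E ℂ‖ ≤ M / ε := by
  have hslice : DiffContOnCl ℂ (fun z => g (x, z)) (ball y ε) :=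
    DifferentiableOn.diffContOnCl_ball (fun z hz =>
      (hg z hz).hasFDerivAt_comp_prodMk_right.differentiableAt.differentiableWithinAt) subset_rfl
  rw [← (hg y (mem_closedBall_self hε.le)).hasFDerivAt_comp_prodMk_right.fderiv,
    ← norm_deriv_eq_norm_fderiv]
  exact norm_deriv_le_of_forall_mem_sphere_norm_le hε hslice hM

noncomputable def cauchyIntegrand (g : ℂ × ℂ → ℂ) (w : ℂ) (p : ℂ × ℂ) : ℂ :=
  (w - p.1)⁻¹ • g (w, p.2)

noncomputable def cauchyIntegrandFDeriv (g : ℂ × ℂ → ℂ) (w : ℂ) (p : ℂ × ℂ) :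
    ℂ × ℂ →L[ℂ] ℂ :=
  (w - p.1)⁻¹ • ((fderiv ℂ g (w, p.2) ∘L inr ℂ ℂ ℂ) ∘L snd ℂ ℂ ℂ) +
    ((w - p.1) ^ 2)⁻¹ • g (w, p.2) • fst ℂ ℂ ℂ

noncomputable def partialCauchyIntegral (g : ℂ × ℂ → ℂ) (r : ℝ) (p : ℂ × ℂ) : ℂ :=
  (2 * π * I : ℂ)⁻¹ • ∮ z in C(0, r), cauchyIntegrand g z p

section CauchyIntegrand

variable {g : ℂ × ℂ → ℂ} {w : ℂ} {p : ℂ × ℂ}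

lemma hasFDerivAt_cauchyIntegrand (hw : w ≠ p.1) (hg : DifferentiableAt ℂ g (w, p.2)) :
    HasFDerivAt (cauchyIntegrand g w) (cauchyIntegrandFDeriv g w p) p := by
  have hinv : HasFDerivAt (fun q : ℂ × ℂ => (w - q.1)⁻¹) _ p :=
    (hasDerivAt_inv (sub_ne_zero.mpr hw)).comp_hasFDerivAt p
      ((hasFDerivAt_fst (𝕜 := ℂ) (p := p)).const_sub w)
  have hslice : HasFDerivAt (fun q : ℂ × ℂ => g (w, q.2)) _ p :=
    hg.hasFDerivAt_comp_prodMk_right.comp p hasFDerivAt_snd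
  refine (hinv.smul hslice).congr_fderiv ?_
  ext <;> simp [cauchyIntegrandFDeriv, mul_comm]

lemma norm_cauchyIntegrandFDeriv_le {ε A B : ℝ} (hw : ε ≤ ‖w - p.1‖) (hε : 0 < ε)
    (hA : ‖fderiv ℂ g (w, p.2) ∘L inr ℂ ℂ ℂ‖ ≤ A) (hB : ‖g (w, p.2)‖ ≤ B) :
    ‖cauchyIntegrandFDeriv g w p‖ ≤ A / ε + B / ε ^ 2 := by
  have hA0 : 0 ≤ A := (norm_nonneg _).trans hA
  have hB0 : 0 ≤ B := (norm_nonneg _).trans hB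
  calc ‖cauchyIntegrandFDeriv g w p‖
      ≤ ‖w - p.1‖⁻¹ * (‖fderiv ℂ g (w, p.2) ∘L inr ℂ ℂ ℂ‖ * ‖snd ℂ ℂ ℂ‖) +
        (‖w - p.1‖ ^ 2)⁻¹ * (‖g (w, p.2)‖ * ‖fst ℂ ℂ ℂ‖) := by
        refine (norm_add_le _ _).trans ?_
        rw [norm_smul, norm_smul, norm_smul, norm_inv, norm_inv, norm_pow]
        gcongr
        exact opNorm_comp_le (fderiv ℂ g (w, p.2) ∘L inr ℂ ℂ ℂ) (snd ℂ ℂ ℂ)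
    _ ≤ ε⁻¹ * (A * 1) + (ε ^ 2)⁻¹ * (B * 1) := by
        gcongr
        exacts [norm_snd_le ℂ ℂ ℂ, norm_fst_le ℂ ℂ ℂ]
    _ = A / ε + B / ε ^ 2 := by ring

lemma measurable_cauchyIntegrandFDeriv_circleMap {r : ℝ}
    (hg : Continuous fun θ => g (circleMap 0 r θ, p.2)) :
    Measurable fun θ => cauchyIntegrandFDeriv g (circleMap 0 r θ) p := by
  have hw : Continuous (circleMap 0 r) := continuous_circleMap 0 r
  have hD : Measurable fun θ => fderiv ℂ g (circleMap 0 r θ, p.2) :=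
    (measurable_fderiv ℂ g).comp (hw.prodMk continuous_const).measurable
  have hc : Continuous fun θ => circleMap 0 r θ - p.1 := hw.sub continuous_const
  refine (hc.measurable.inv.smul ?_).add
    ((hc.pow 2).measurable.inv.smul (hg.measurable.smul_const _))
  exact ((compL ℂ _ _ _).flip (snd ℂ ℂ ℂ)).continuous.measurable.comp
    (((compL ℂ _ _ _).flip (inr ℂ ℂ ℂ)).continuous.measurable.comp hD)

end CauchyIntegrand

section PartialCauchyIntegral

variable {g : ℂ × ℂ → ℂ} {r s : ℝ}

lemma partialCauchyIntegral_eq {p : ℂ × ℂ} (hp : p.1 ∈ ball 0 r)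
    (hg : ∀ z ∈ closedBall (0 : ℂ) r, DifferentiableAt ℂ g (z, p.2)) :
    partialCauchyIntegral g r p = g p :=
  (DifferentiableOn.diffContOnCl_ball (fun z hz =>
    (hg z hz).comp_prodMk_left.differentiableWithinAt) subset_rfl
    ).two_pi_i_inv_smul_circleIntegral_sub_inv_smul hp

lemma exists_bound_cauchyIntegrandFDeriv
    (hg : ∀ q ∈ sphere (0 : ℂ) r ×ˢ ball (0 : ℂ) s, DifferentiableAt ℂ g q)
    {x₀ : ℂ × ℂ} (hx₀ : x₀ ∈ ball (0 : ℂ) r ×ˢ ball (0 : ℂ) s) :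
    ∃ ε > 0, ∃ C, ∀ x ∈ ball x₀ ε, ∀ w ∈ sphere (0 : ℂ) r,
      w ≠ x.1 ∧ DifferentiableAt ℂ g (w, x.2) ∧ ‖cauchyIntegrandFDeriv g w x‖ ≤ C := by
  obtain ⟨hx₁, hx₂⟩ := hx₀
  rw [mem_ball_zero_iff] at hx₁ hx₂
  obtain ⟨ε, hε, hε₁, hε₂⟩ : ∃ ε > 0, ‖x₀.1‖ + 3 * ε ≤ r ∧ ‖x₀.2‖ + 3 * ε ≤ s :=
    ⟨min (r - ‖x₀.1‖) (s - ‖x₀.2‖) / 3, by positivity,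
      by linarith [min_le_left (r - ‖x₀.1‖) (s - ‖x₀.2‖)],
      by linarith [min_le_right (r - ‖x₀.1‖) (s - ‖x₀.2‖)]⟩
  have hK : sphere (0 : ℂ) r ×ˢ closedBall (0 : ℂ) (s - ε) ⊆ sphere 0 r ×ˢ ball 0 s :=
    prod_mono subset_rfl (closedBall_subset_ball (by linarith))
  obtain ⟨M, hM⟩ := ((isCompact_sphere 0 r).prod (isCompact_closedBall 0 (s - ε))
    ).exists_bound_of_continuousOn fun q hq => (hg q (hK hq)).continuousAt.continuousWithinAt
  refine ⟨ε, hε, M / ε / ε + M / ε ^ 2, fun x hx w hw => ?_⟩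
  have hxx₀ : ‖x.1 - x₀.1‖ < ε ∧ ‖x.2 - x₀.2‖ < ε := by
    rw [mem_ball_iff_norm] at hx
    exact ⟨(_root_.norm_fst_le _).trans_lt hx, (_root_.norm_snd_le _).trans_lt hx⟩
  rw [mem_sphere_zero_iff_norm] at hw
  have hwx : ε ≤ ‖w - x.1‖ := by
    have := norm_sub_norm_le w x.1
    have := norm_le_norm_add_norm_sub' x.1 x₀.1
    linarith
  have hslice : closedBall x.2 ε ⊆ closedBall 0 (s - ε) := fun z hz => by
    rw [mem_closedBall_iff_norm] at hz
    rw [mem_closedBall_zero_iff]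
    have := norm_le_norm_add_norm_sub' z x.2
    have := norm_le_norm_add_norm_sub' x.2 x₀.2
    linarith
  have hmem : ∀ z ∈ closedBall x.2 ε, (w, z) ∈ sphere (0 : ℂ) r ×ˢ closedBall 0 (s - ε) :=
    fun z hz => ⟨mem_sphere_zero_iff_norm.mpr hw, hslice hz⟩
  have hcenter := hmem x.2 (mem_closedBall_self hε.le)
  refine ⟨fun h => by rw [h, sub_self, norm_zero] at hwx; linarith, hg _ (hK hcenter),
    norm_cauchyIntegrandFDeriv_le hwx hε ?_ (hM _ hcenter)⟩
  exact norm_fderiv_comp_inr_le hε (fun z hz => hg _ (hK (hmem z hz)))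
    fun z hz => hM _ (hmem z (sphere_subset_closedBall hz))

theorem differentiableOn_partialCauchyIntegral
    (hg : ∀ q ∈ sphere (0 : ℂ) r ×ˢ ball (0 : ℂ) s, DifferentiableAt ℂ g q) :
    DifferentiableOn ℂ (partialCauchyIntegral g r) (ball 0 r ×ˢ ball 0 s) := by
  intro x₀ hx₀
  obtain ⟨ε, hε, C, hC⟩ := exists_bound_cauchyIntegrandFDeriv hg hx₀
  have hr : 0 ≤ r := (norm_nonneg _).trans (mem_ball_zero_iff.mp hx₀.1).le
  have hw : ∀ θ, circleMap 0 r θ ∈ sphere (0 : ℂ) r := circleMap_mem_sphere 0 hr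
  have hint : ∀ x ∈ ball x₀ ε, CircleIntegrable (cauchyIntegrand g · x) 0 r := fun x hx =>
    ContinuousOn.circleIntegrable hr fun w hw => (((continuousAt_id.sub continuousAt_const).inv₀
      (sub_ne_zero.mpr (hC x hx w hw).1)).smul
      (hC x hx w hw).2.1.comp_prodMk_left.continuousAt).continuousWithinAt
  have hslice : Continuous fun θ => g (circleMap 0 r θ, x₀.2) :=
    continuous_iff_continuousAt.mpr fun θ =>
      (hC x₀ (mem_ball_self hε) _ (hw θ)).2.1.comp_prodMk_left.continuousAt.comp
        (continuous_circleMap 0 r).continuousAt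
  have hderiv := intervalIntegral.hasFDerivAt_integral_of_dominated_of_fderiv_le
    (F := fun x θ => deriv (circleMap 0 r) θ • cauchyIntegrand g (circleMap 0 r θ) x)
    (F' := fun x θ => deriv (circleMap 0 r) θ • cauchyIntegrandFDeriv g (circleMap 0 r θ) x)
    (bound := fun _ => r * C) (ball_mem_nhds x₀ hε)
    (eventually_of_mem (ball_mem_nhds x₀ hε) fun x hx =>
      (hint x hx).out.def'.aestronglyMeasurable)
    (hint x₀ (mem_ball_self hε)).out ?_ ?_ intervalIntegrable_const ?_
  · exact (hderiv.differentiableAt.const_smul (2 * π * I : ℂ)⁻¹).differentiableWithinAt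
  · simp only [deriv_circleMap]
    exact (((continuous_circleMap 0 r).mul continuous_const).measurable.smul
      (measurable_cauchyIntegrandFDeriv_circleMap hslice)).aestronglyMeasurable
  · refine ae_of_all _ fun θ _ x hx => ?_
    rw [norm_smul, deriv_circleMap, norm_mul, norm_I, mul_one, norm_circleMap_zero,
      abs_of_nonneg hr]
    exact mul_le_mul_of_nonneg_left (hC x hx _ (hw θ)).2.2 hr
  · refine ae_of_all _ fun θ _ x hx => ?_
    exact (hasFDerivAt_cauchyIntegrand (hC x hx _ (hw θ)).1 (hC x hx _ (hw θ)).2.1).const_smul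
      (deriv (circleMap 0 r) θ)

variable (hg : ∀ q ∈ closedBall (0 : ℂ × ℂ) r \ {0}, DifferentiableAt ℂ g q)
include hg

lemma differentiableOn_partialCauchyIntegral_ball :
    DifferentiableOn ℂ (partialCauchyIntegral g r) (ball 0 r) := by
  rw [show (0 : ℂ × ℂ) = (0, 0) from rfl, ← ball_prod_same]
  refine differentiableOn_partialCauchyIntegral fun q ⟨hq₁, hq₂⟩ => hg q ⟨?_, ?_⟩
  · rw [mem_closedBall_zero_iff, Prod.norm_def]
    exact max_le (mem_sphere_zero_iff_norm.mp hq₁).le (mem_ball_zero_iff.mp hq₂).le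
  · rintro rfl
    rw [mem_sphere_zero_iff_norm, Prod.fst_zero, norm_zero] at hq₁
    exact (mem_ball_zero_iff.mp hq₂).not_ge (hq₁ ▸ norm_nonneg _)

lemma partialCauchyIntegral_eqOn : EqOn (partialCauchyIntegral g r) g (ball 0 r \ {0}) := by
  have hsnd : ∀ q ∈ ball (0 : ℂ × ℂ) r, q.2 ≠ 0 → partialCauchyIntegral g r q = g q := by
    intro q hq hq₂
    rw [mem_ball_zero_iff] at hq
    refine partialCauchyIntegral_eq (mem_ball_zero_iff.mpr ((norm_fst_le q).trans_lt hq))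
      fun z hz => hg (z, q.2) ⟨?_, fun h => hq₂ (congrArg Prod.snd h)⟩
    rw [mem_closedBall_zero_iff, Prod.norm_def]
    exact max_le (mem_closedBall_zero_iff.mp hz) ((norm_snd_le q).trans hq.le)
  rintro q ⟨hq, hq0⟩
  rcases ne_or_eq q.2 0 with hq₂ | hq₂
  · exact hsnd q hq hq₂
  obtain ⟨x, rfl⟩ : ∃ x, q = (x, 0) := ⟨q.1, Prod.ext rfl hq₂⟩
  have hslice : Continuous fun b : ℂ => (x, b) := continuous_const.prodMk continuous_id
  have hG : ContinuousAt (fun b => partialCauchyIntegral g r (x, b)) 0 :=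
    ((differentiableOn_partialCauchyIntegral_ball hg).differentiableAt
      (isOpen_ball.mem_nhds hq)).continuousAt.comp hslice.continuousAt
  have hg' : ContinuousAt (fun b => g (x, b)) 0 :=
    (hg _ ⟨ball_subset_closedBall hq, hq0⟩).continuousAt.comp hslice.continuousAt
  have hball : ∀ᶠ b in 𝓝 (0 : ℂ), (x, b) ∈ ball (0 : ℂ × ℂ) r :=
    hslice.continuousAt.preimage_mem_nhds (isOpen_ball.mem_nhds hq)
  refine ((hG.eventuallyEq_nhds_iff_eventuallyEq_nhdsNE hg').mp ?_).eq_of_nhds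
  filter_upwards [self_mem_nhdsWithin, nhdsWithin_le_nhds hball] with b hb₀ hb
  exact hsnd _ hb hb₀

end PartialCauchyIntegral

theorem exists_differentiableAt_update_zero {g : ℂ × ℂ → ℂ}
    (hg : ∀ᶠ q in 𝓝[≠] (0 : ℂ × ℂ), DifferentiableAt ℂ g q) :
    ∃ a, DifferentiableAt ℂ (Function.update g 0 a) 0 := by
  obtain ⟨ρ, hρ, hρg⟩ := Metric.mem_nhdsWithin_iff.mp hg
  have hr : ∀ q ∈ closedBall (0 : ℂ × ℂ) (ρ / 2) \ {0}, DifferentiableAt ℂ g q := fun q hq =>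
    hρg ⟨closedBall_subset_ball (half_lt_self hρ) hq.1, hq.2⟩
  refine ⟨partialCauchyIntegral g (ρ / 2) 0, ?_⟩
  have hG : partialCauchyIntegral g (ρ / 2) =ᶠ[𝓝 0]
      Function.update g 0 (partialCauchyIntegral g (ρ / 2) 0) := by
    filter_upwards [ball_mem_nhds 0 (half_pos hρ)] with q hq
    rcases eq_or_ne q 0 with rfl | hq0
    · rw [Function.update_self]
    · rw [Function.update_of_ne hq0]
      exact partialCauchyIntegral_eqOn hr ⟨hq, hq0⟩
  exact hG.differentiableAt_iff.mp
    ((differentiableOn_partialCauchyIntegral_ball hr).differentiableAt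
      (ball_mem_nhds 0 (half_pos hρ)))

theorem ContinuousLinearEquiv.exists_differentiableAt_update_zero {V : Type*}
    [NormedAddCommGroup V] [NormedSpace ℂ V] [DecidableEq V] (e : V ≃L[ℂ] ℂ × ℂ) {f : V → ℂ}
    (hf : ∀ᶠ z in 𝓝[≠] 0, DifferentiableAt ℂ f z) :
    ∃ a, DifferentiableAt ℂ (Function.update f 0 a) 0 := by
  have he : Tendsto e.symm (𝓝[≠] 0) (𝓝[≠] 0) :=
    (e.symm.toHomeomorph.map_punctured_nhds_eq 0).le.trans_eq (by simp)
  obtain ⟨a, ha⟩ := _root_.exists_differentiableAt_update_zero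
    ((he.eventually hf).mono fun q hq => hq.comp q e.symm.differentiableAt)
  have hcomp : Function.update f 0 a = Function.update (f ∘ e.symm) (e 0) a ∘ e := by
    rw [Function.update_comp_eq_of_injective _ e.injective]
    simp [Function.comp_def]
  exact ⟨a, hcomp ▸ (map_zero e ▸ ha).comp 0 e.differentiableAt⟩

/-- Every function holomorphic on the punctured open unit ball
`{z ∈ ℂ² : 0 < ‖z‖ < 1}` extends to a holomorphic function on the full open unit ball
`{z ∈ ℂ² : ‖z‖ < 1}`; in particular holomorphic functions of two complex variables have
no isolated singularities. -/
theorem extend_across_puncture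
    (f : EuclideanSpace ℂ (Fin 2) → ℂ)
    (hf : DifferentiableOn ℂ f {z : EuclideanSpace ℂ (Fin 2) | 0 < ‖z‖ ∧ ‖z‖ < 1}) :
    ∃ F : EuclideanSpace ℂ (Fin 2) → ℂ,
      DifferentiableOn ℂ F {z : EuclideanSpace ℂ (Fin 2) | ‖z‖ < 1} ∧
      Set.EqOn F f {z : EuclideanSpace ℂ (Fin 2) | 0 < ‖z‖ ∧ ‖z‖ < 1} := by
  have hΩ : IsOpen {z : EuclideanSpace ℂ (Fin 2) | 0 < ‖z‖ ∧ ‖z‖ < 1} :=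
    (isOpen_lt continuous_const continuous_norm).inter (isOpen_lt continuous_norm continuous_const)
  have hΩ₀ : {z : EuclideanSpace ℂ (Fin 2) | 0 < ‖z‖ ∧ ‖z‖ < 1} ∈ 𝓝[≠] 0 :=
    mem_nhdsWithin.mpr ⟨ball 0 1, isOpen_ball, mem_ball_self one_pos,
      fun z hz => ⟨norm_pos_iff.mpr hz.2, mem_ball_zero_iff.mp hz.1⟩⟩
  obtain ⟨a, ha⟩ := ((EuclideanSpace.equiv (Fin 2) ℂ).trans
    (ContinuousLinearEquiv.finTwoArrow ℂ ℂ)).exists_differentiableAt_update_zero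
    (eventually_of_mem hΩ₀ fun z hz => hf.differentiableAt (hΩ.mem_nhds hz))
  refine ⟨Function.update f 0 a, fun z hz => ?_, fun z hz =>
    Function.update_of_ne (norm_pos_iff.mp hz.1) a f⟩
  rcases eq_or_ne z 0 with rfl | hz0
  · exact ha.differentiableWithinAt
  refine ((hf.differentiableAt (hΩ.mem_nhds ⟨norm_pos_iff.mpr hz0, hz⟩)).congr_of_eventuallyEq
    ?_).differentiableWithinAt
  filter_upwards [isOpen_ne.mem_nhds hz0] with w hw using Function.update_of_ne hw a f
end

section
/- (Poincaré.) There is no biholomorphic map from the open unit ball B onto the open polydisc P in ℂ²: there exists no bijection φ : B → P such that φ is holomorphic on B and φ⁻¹ is holomorphic on P. -/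
open Complex

/-- The open unit ball in `ℂ²`. -/
def unitBallC2 : Set (ℂ × ℂ) := {z | ‖z.1‖ ^ 2 + ‖z.2‖ ^ 2 < 1}

/-- The open unit polydisc in `ℂ²`. -/
def polydiscC2 : Set (ℂ × ℂ) := {z | ‖z.1‖ < 1 ∧ ‖z.2‖ < 1}

/-!
Let `ψ : P → B` be holomorphic with holomorphic left inverse `φ`. Since `φ` is continuous on the
ball, `ψ` is proper: `ψ (0, w)` tends to the unit sphere as `‖w‖ → 1`. For a holomorphic disc
`h` in the unit ball, `1 - ⟪h 0, h z⟫` has positive real part, so Harnack's inequality gives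
`‖h z - h 0‖² ≤ 2 (1 - ‖h 0‖²) (1 + ‖z‖) / (1 - ‖z‖)`: a disc through a point near the sphere is
nearly constant. Applied to the slices `z ↦ ψ (z, w)`, this makes `w ↦ ψ (1/2, w) - ψ (0, w)`
small near the unit circle, hence zero by the maximum principle, contradicting injectivity.
-/

open Metric Set WithLp

theorem norm_sub_div_add_lt_one {w : ℂ} {a : ℝ} (ha : 0 < a) (hw : 0 < w.re) :
    ‖(w - a) / (w + a)‖ < 1 := by
  have hpos : 0 < ‖w + a‖ := by
    have := re_le_norm (w + a)
    simp only [add_re, ofReal_re] at this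
    linarith
  rw [norm_div, div_lt_one hpos, ← sq_lt_sq₀ (norm_nonneg _) hpos.le, Complex.sq_norm,
    Complex.sq_norm]
  simp only [normSq_apply, add_re, add_im, sub_re, sub_im, ofReal_re, ofReal_im]
  nlinarith

theorem norm_le_of_forall_re_pos {H : ℂ → ℂ} {a : ℝ} (hd : DifferentiableOn ℂ H (ball 0 1))
    (hre : ∀ z ∈ ball (0 : ℂ) 1, 0 < (H z).re) (h₀ : H 0 = a) {z : ℂ} (hz : ‖z‖ < 1) :
    ‖H z‖ ≤ a * (1 + ‖z‖) / (1 - ‖z‖) := by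
  have ha : 0 < a := by simpa [h₀] using hre 0 (mem_ball_self one_pos)
  have hne : ∀ z ∈ ball (0 : ℂ) 1, H z + a ≠ 0 := fun z hz h => by
    have := congrArg re h
    simp only [add_re, ofReal_re, zero_re] at this
    linarith [hre z hz]
  -- Schwarz's lemma applies to the Cayley transform `G` of `H`, and `H = a (1 + G) / (1 - G)`.
  set G : ℂ → ℂ := fun z => (H z - a) / (H z + a)
  have hGd : DifferentiableOn ℂ G (ball 0 1) := (hd.sub_const _).div (hd.add_const _) hne
  have hGmaps : MapsTo G (ball 0 1) (closedBall 0 1) := fun z hz =>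
    mem_closedBall_zero_iff.mpr (norm_sub_div_add_lt_one ha (hre z hz)).le
  have hG₀ : G 0 = 0 := by simp [G, h₀]
  have hSchwarz : ‖G z‖ ≤ ‖z‖ := norm_le_norm_of_mapsTo_ball hGd hGmaps hG₀ hz
  have hz' : z ∈ ball (0 : ℂ) 1 := mem_ball_zero_iff.mpr hz
  have hinv : H z * (1 - G z) = a * (1 + G z) := by
    simp only [G]
    field_simp [hne z hz']
    ring
  have hupper : ‖H z‖ * (1 - ‖G z‖) ≤ a * (1 + ‖G z‖) := by
    calc ‖H z‖ * (1 - ‖G z‖) ≤ ‖H z‖ * ‖1 - G z‖ := by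
          gcongr
          simpa using norm_sub_norm_le (1 : ℂ) (G z)
      _ = a * ‖1 + G z‖ := by rw [← norm_mul, hinv, norm_mul, norm_real, Real.norm_of_nonneg ha.le]
      _ ≤ a * (1 + ‖G z‖) := by gcongr; simpa using norm_add_le (1 : ℂ) (G z)
  rw [le_div_iff₀ (by linarith)]
  nlinarith [norm_nonneg (H z)]

theorem norm_sub_sq_le_of_mapsTo_ball {E : Type*} [NormedAddCommGroup E] [InnerProductSpace ℂ E]
    {h : ℂ → E} (hd : DifferentiableOn ℂ h (ball 0 1)) (hmaps : MapsTo h (ball 0 1) (ball 0 1))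
    {z : ℂ} (hz : ‖z‖ < 1) :
    ‖h z - h 0‖ ^ 2 ≤ 2 * (1 - ‖h 0‖ ^ 2) * (1 + ‖z‖) / (1 - ‖z‖) := by
  have hnorm : ∀ z ∈ ball (0 : ℂ) 1, ‖h z‖ < 1 := fun z hz => mem_ball_zero_iff.mp (hmaps hz)
  set H : ℂ → ℂ := fun z => 1 - inner ℂ (h 0) (h z)
  have hHd : DifferentiableOn ℂ H (ball 0 1) :=
    ((innerSL ℂ (h 0)).differentiable.comp_differentiableOn hd).const_sub 1
  have hre : ∀ z, (H z).re = 1 - RCLike.re (inner ℂ (h 0) (h z)) := fun z => by simp [H]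
  have hHre : ∀ z ∈ ball (0 : ℂ) 1, 0 < (H z).re := fun z hz => by
    have := re_inner_le_norm (𝕜 := ℂ) (h 0) (h z)
    rw [hre]
    nlinarith [hnorm 0 (mem_ball_self one_pos), hnorm z hz, norm_nonneg (h 0), norm_nonneg (h z)]
  have hH₀ : H 0 = ((1 - ‖h 0‖ ^ 2 : ℝ) : ℂ) := by
    simp [H, inner_self_eq_norm_sq_to_K]
  have hHarnack := norm_le_of_forall_re_pos hHd hHre hH₀ hz
  calc ‖h z - h 0‖ ^ 2 = ‖h z‖ ^ 2 + ‖h 0‖ ^ 2 - 2 * RCLike.re (inner ℂ (h 0) (h z)) := by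
        rw [@norm_sub_sq ℂ, inner_re_symm]; ring
    _ ≤ 2 * (H z).re := by
        rw [hre]
        nlinarith [hnorm z (mem_ball_zero_iff.mpr hz), hnorm 0 (mem_ball_self one_pos),
          norm_nonneg (h 0), norm_nonneg (h z)]
    _ ≤ 2 * ‖H z‖ := by gcongr; exact re_le_norm _
    _ ≤ 2 * (1 - ‖h 0‖ ^ 2) * (1 + ‖z‖) / (1 - ‖z‖) := by
        rw [mul_assoc, mul_div_assoc]; gcongr

theorem eq_zero_of_forall_norm_le_near_sphere {E : Type*} [NormedAddCommGroup E]
    [NormedSpace ℂ E] {g : ℂ → E} (hd : DifferentiableOn ℂ g (ball 0 1))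
    (hbdry : ∀ ε > 0, ∃ r < 1, ∀ w : ℂ, r < ‖w‖ → ‖w‖ < 1 → ‖g w‖ ≤ ε)
    {z : ℂ} (hz : ‖z‖ < 1) : g z = 0 := by
  refine norm_le_zero_iff.mp (le_of_forall_pos_le_add fun ε hε => ?_)
  obtain ⟨r, hr1, hr⟩ := hbdry ε hε
  obtain ⟨s, hs, hs1⟩ := exists_between (max_lt hr1 hz)
  have hrs : r < s := (le_max_left r ‖z‖).trans_lt hs
  have hzs : ‖z‖ < s := (le_max_right r ‖z‖).trans_lt hs
  have hs0 : 0 < s := (norm_nonneg z).trans_lt hzs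
  have hsub : closure (ball (0 : ℂ) s) ⊆ ball 0 1 := by
    rw [closure_ball 0 hs0.ne']
    exact closedBall_subset_ball hs1
  rw [zero_add]
  refine norm_le_of_forall_mem_frontier_norm_le isBounded_ball (hd.mono hsub).diffContOnCl
    (fun w hw => ?_) (subset_closure (mem_ball_zero_iff.mpr hzs))
  rw [frontier_ball 0 hs0.ne', mem_sphere_zero_iff_norm] at hw
  exact hr w (hw ▸ hrs) (hw ▸ hs1)

theorem mem_unitBallC2_iff {z : ℂ × ℂ} : z ∈ unitBallC2 ↔ ‖toLp 2 z‖ < 1 := by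
  rw [← sq_lt_one_iff₀ (norm_nonneg _), prod_norm_sq_eq_of_L2]
  rfl

theorem exists_lt_norm_toLp_of_lt_norm_snd {φ ψ : ℂ × ℂ → ℂ × ℂ}
    (hφ : ContinuousOn φ unitBallC2) (hφm : MapsTo φ unitBallC2 polydiscC2)
    (hφψ : RightInvOn ψ φ polydiscC2) {r : ℝ} (hr : r < 1) :
    ∃ M < 1, ∀ p ∈ polydiscC2, M < ‖p.2‖ → r < ‖toLp 2 (ψ p)‖ := by
  set K : Set (ℂ × ℂ) := toLp 2 ⁻¹' closedBall 0 r
  have hKB : K ⊆ unitBallC2 := fun q hq =>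
    mem_unitBallC2_iff.mpr ((mem_closedBall_zero_iff.mp hq).trans_lt hr)
  have hK : IsCompact K :=
    (prodContinuousLinearEquiv 2 ℂ ℂ ℂ).symm.toHomeomorph.isCompact_preimage.mpr
      (isCompact_closedBall 0 r)
  have hφK : IsCompact (φ '' K) := hK.image_of_continuousOn (hφ.mono hKB)
  obtain ⟨a, ha, hle⟩ := hφK.exists_forall_le' (f := fun p : ℂ × ℂ => -‖p.2‖) (a := -1)
    (by fun_prop) (fun p hp => by
      obtain ⟨q, hq, rfl⟩ := hp
      exact neg_lt_neg (hφm (hKB hq)).2)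
  refine ⟨-a, by linarith, fun p hp hM => lt_of_not_ge fun hψp => ?_⟩
  have := hle p (hφψ hp ▸ mem_image_of_mem φ (mem_closedBall_zero_iff.mpr hψp))
  linarith

section Slices

variable {F : Type*} [NormedAddCommGroup F] [NormedSpace ℂ F] {f : ℂ × ℂ → F}

theorem DifferentiableOn.polydiscC2_slice_fst (hf : DifferentiableOn ℂ f polydiscC2) {w : ℂ}
    (hw : ‖w‖ < 1) : DifferentiableOn ℂ (fun z => f (z, w)) (ball 0 1) :=
  hf.comp (differentiable_id.prodMk (differentiable_const w)).differentiableOn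
    fun _ hz => ⟨mem_ball_zero_iff.mp hz, hw⟩

theorem DifferentiableOn.polydiscC2_slice_snd (hf : DifferentiableOn ℂ f polydiscC2) {z : ℂ}
    (hz : ‖z‖ < 1) : DifferentiableOn ℂ (fun w => f (z, w)) (ball 0 1) :=
  hf.comp ((differentiable_const z).prodMk differentiable_id).differentiableOn
    fun _ hw => ⟨hz, mem_ball_zero_iff.mp hw⟩

end Slices

/-- **Poincaré.** There is no biholomorphic map from the open unit ball onto the open
polydisc in `ℂ²`: no map `φ`, holomorphic on `B` with a holomorphic inverse `ψ` on `P`,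
carries `B` bijectively onto `P`. -/
theorem no_biholomorphism_ball_polydisc :
    ¬ ∃ (φ ψ : ℂ × ℂ → ℂ × ℂ),
        DifferentiableOn ℂ φ unitBallC2 ∧
        DifferentiableOn ℂ ψ polydiscC2 ∧
        Set.MapsTo φ unitBallC2 polydiscC2 ∧
        Set.MapsTo ψ polydiscC2 unitBallC2 ∧
        (∀ z ∈ unitBallC2, ψ (φ z) = z) ∧
        (∀ w ∈ polydiscC2, φ (ψ w) = w) := by
  rintro ⟨φ, ψ, hφd, hψd, hφm, hψm, -, hφψ⟩
  have hΨd : DifferentiableOn ℂ (fun p => toLp 2 (ψ p)) polydiscC2 :=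
    (prodContinuousLinearEquiv 2 ℂ ℂ ℂ).symm.differentiable.comp_differentiableOn hψd
  have hflat : ∀ w : ℂ, ‖w‖ < 1 →
      ‖toLp 2 (ψ (1 / 2, w)) - toLp 2 (ψ (0, w))‖ ^ 2 ≤ 6 * (1 - ‖toLp 2 (ψ (0, w))‖ ^ 2) :=
    fun w hw => by
      have := norm_sub_sq_le_of_mapsTo_ball (hΨd.polydiscC2_slice_fst hw)
        (fun z hz => mem_ball_zero_iff.mpr (mem_unitBallC2_iff.mp
          (hψm ⟨mem_ball_zero_iff.mp hz, hw⟩))) (z := 1 / 2) (by norm_num)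
      norm_num at this
      linarith
  have hvanish : toLp 2 (ψ (1 / 2, 0)) - toLp 2 (ψ (0, 0)) = 0 := by
    refine eq_zero_of_forall_norm_le_near_sphere
      ((hΨd.polydiscC2_slice_snd (by norm_num)).sub (hΨd.polydiscC2_slice_snd (by norm_num)))
      (fun ε hε => ?_) (by norm_num)
    obtain ⟨M, hM1, hM⟩ := exists_lt_norm_toLp_of_lt_norm_snd hφd.continuousOn hφm hφψ
      (r := 1 - ε ^ 2 / 12) (by linarith [pow_pos hε 2])
    refine ⟨M, hM1, fun w hMw hw => ?_⟩
    have hnear := hM (0, w) ⟨by norm_num, hw⟩ hMw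
    rw [Pi.sub_apply, ← pow_le_pow_iff_left₀ (norm_nonneg _) hε.le two_ne_zero]
    nlinarith [hflat w hw, sq_nonneg (1 - ‖toLp 2 (ψ (0, w))‖)]
  have := congrArg φ (toLp_injective 2 (sub_eq_zero.mp hvanish))
  rw [hφψ _ ⟨by norm_num, by norm_num⟩, hφψ _ ⟨by norm_num, by norm_num⟩] at this
  norm_num at this
end

section
/- There is no biholomorphic map carrying the unit sphere S³ = ∂B onto the boundary of the polydisc ∂P in ℂ²: there is no open set U ⊆ ℂ² containing S³ and injective holomorphic map φ : U → ℂ² with holomorphic inverse on φ(U) such that φ(S³) = ∂P. -/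
/-! The boundary of the polydisc contains the analytic disc `{1} × 𝔻`, whereas the sphere contains
no nonconstant analytic disc: a holomorphic map into a sphere of a strictly convex space has
constant norm, so it is constant by the maximum modulus principle. Pulling `{1} × 𝔻` back by `ψ`
would produce such a disc. -/

open Complex

/-- The unit sphere `S³` in `ℂ²`, the boundary of the unit ball. -/
def unitSphereC2 : Set (ℂ × ℂ) := {z | ‖z.1‖ ^ 2 + ‖z.2‖ ^ 2 = 1}

open Set Metric

theorem Complex.eqOn_of_isPreconnected_of_mapsTo_sphere {E F : Type*} [NormedAddCommGroup E]
    [NormedSpace ℂ E] [NormedAddCommGroup F] [NormedSpace ℂ F] [StrictConvexSpace ℝ F]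
    {f : E → F} {U : Set E} {c : E} {a : F} {r : ℝ} (hc : IsPreconnected U) (ho : IsOpen U)
    (hd : DifferentiableOn ℂ f U) (hcU : c ∈ U) (hf : MapsTo f U (sphere a r)) :
    EqOn f (Function.const E (f c)) U := by
  have hmax : IsMaxOn (norm ∘ (f · - a)) U c := isMaxOn_iff.2 fun z hz => by
    simp only [Function.comp_apply, ← dist_eq_norm, mem_sphere.1 (hf hz), mem_sphere.1 (hf hcU),
      le_refl]
  intro z hz
  simpa using eqOn_of_isPreconnected_of_isMaxOn_norm hc ho (hd.sub_const a) hcU hmax hz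

theorem mem_unitSphereC2_iff {z : ℂ × ℂ} :
    z ∈ unitSphereC2 ↔ WithLp.toLp 2 z ∈ sphere (0 : WithLp 2 (ℂ × ℂ)) 1 := by
  rw [mem_sphere_zero_iff_norm, ← pow_eq_one_iff_of_nonneg (norm_nonneg _) two_ne_zero,
    WithLp.prod_norm_sq_eq_of_L2]
  rfl

theorem eqOn_of_isPreconnected_of_mapsTo_unitSphereC2 {E : Type*} [NormedAddCommGroup E]
    [NormedSpace ℂ E] {f : E → ℂ × ℂ} {U : Set E} {c : E} (hc : IsPreconnected U)
    (ho : IsOpen U) (hd : DifferentiableOn ℂ f U) (hcU : c ∈ U) (hf : MapsTo f U unitSphereC2) :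
    EqOn f (Function.const E (f c)) U := by
  intro z hz
  have := Complex.eqOn_of_isPreconnected_of_mapsTo_sphere (f := WithLp.toLp 2 ∘ f) hc ho
    ((WithLp.prodContinuousLinearEquiv 2 ℂ ℂ ℂ).symm.differentiable.comp_differentiableOn hd) hcU
    (fun z hz => mem_unitSphereC2_iff.1 (hf hz)) hz
  simpa using this

theorem polydiscC2_eq_ball : polydiscC2 = ball (0 : ℂ × ℂ) 1 := by
  ext z
  simp [polydiscC2, Prod.norm_def]

theorem mk_one_mem_frontier_polydiscC2 {w : ℂ} (hw : ‖w‖ ≤ 1) :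
    ((1 : ℂ), w) ∈ frontier polydiscC2 := by
  rw [polydiscC2_eq_ball, frontier_ball 0 one_ne_zero, mem_sphere_zero_iff_norm, Prod.norm_mk]
  simpa using hw

/-- **Poincaré.** There is no biholomorphic map carrying the unit sphere `S³ = ∂B` onto the
boundary of the polydisc in `ℂ²`: there is no open set `U ⊇ S³` and injective holomorphic
`φ : U → ℂ²` with holomorphic inverse on `φ(U)` such that `φ(S³) = ∂P`. -/
theorem no_biholomorphism_sphere_boundary_polydisc :
    ¬ ∃ (U : Set (ℂ × ℂ)) (φ ψ : ℂ × ℂ → ℂ × ℂ),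
        IsOpen U ∧ unitSphereC2 ⊆ U ∧
        DifferentiableOn ℂ φ U ∧
        Set.InjOn φ U ∧
        DifferentiableOn ℂ ψ (φ '' U) ∧
        (∀ z ∈ U, ψ (φ z) = z) ∧
        φ '' unitSphereC2 = frontier polydiscC2 := by
  rintro ⟨U, φ, ψ, -, hSU, -, -, hψ, hlinv, himg⟩
  let slice : ℂ → ℂ × ℂ := fun w => (1, w)
  have hslice : MapsTo slice (ball 0 1) (φ '' unitSphereC2) := fun w hw =>
    himg ▸ mk_one_mem_frontier_polydiscC2 (mem_ball_zero_iff.1 hw).le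
  have hleft : LeftInvOn ψ φ unitSphereC2 := fun z hz => hlinv z (hSU hz)
  have hpull : MapsTo (ψ ∘ slice) (ball 0 1) unitSphereC2 :=
    (hleft.mapsTo (surjOn_image φ _)).comp hslice
  have hdiff : DifferentiableOn ℂ (ψ ∘ slice) (ball 0 1) :=
    hψ.comp ((differentiableOn_const 1).prodMk differentiableOn_id)
      (hslice.mono_right (image_mono hSU))
  have hconst := eqOn_of_isPreconnected_of_mapsTo_unitSphereC2 (convex_ball 0 1).isPreconnected
    isOpen_ball hdiff (mem_ball_self one_pos) hpull
  have hhalf : (1 / 2 : ℂ) ∈ ball (0 : ℂ) 1 := by rw [mem_ball_zero_iff]; norm_num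
  have hslice_eq : slice (1 / 2) = slice 0 := by
    rw [← hleft.rightInvOn_image (hslice hhalf),
      ← hleft.rightInvOn_image (hslice (mem_ball_self one_pos))]
    exact congrArg φ (hconst hhalf)
  simp [slice] at hslice_eq
end
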